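/- Let n = 2, let d_1, d_2 be unit vectors in ℂ^m with |⟨d_1, d_2⟩|² = 1/2, and let ρ_A be a density matrix on ℂ² with q_i = (ρ_A)_{ii}. Then (P_s(q) − 1/2)² + (1/2)·V(ρ̃_A)² + (1/2)·M(ρ̃_A) = 1/4. -/

import Mathlib

open Matrix ComplexOrder

noncomputable section

/-- Inner product ⟨a, b⟩ = ∑ i, conj (a i) * b i on a finite-dimensional complex space. -/
def ip {k : Type*} [Fintype k] (a b : k → ℂ) : ℂ := ∑ i, star (a i) * b i

/-- The optimal success probability of minimum-error discrimination of the detector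
states `d i` with prior probabilities `q i`: the supremum over all POVMs
`Pov` (positive semidefinite matrices summing to the identity) of
`∑ i, q i * ⟨d i, Pov i (d i)⟩`. -/
def Ps {m n : ℕ} (d : Fin n → Fin m → ℂ) (q : Fin n → ℝ) : ℝ :=
  sSup { x : ℝ | ∃ Pov : Fin n → Matrix (Fin m) (Fin m) ℂ,
    (∀ i, (Pov i).PosSemidef) ∧ (∑ i, Pov i) = 1 ∧
    x = ∑ i, q i * (ip (d i) ((Pov i) *ᵥ (d i))).re }

/-- The visibility `V(ρ̃_A) = √( (2(n−1)/n²) ∑_{i≠k} |⟨d_k, d_i⟩|² |(ρ_A)_{ik}|² )`. -/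
def Vis {m n : ℕ} (d : Fin n → Fin m → ℂ) (ρ : Matrix (Fin n) (Fin n) ℂ) : ℝ :=
  Real.sqrt ((2 * ((n : ℝ) - 1) / (n : ℝ) ^ 2) *
    ∑ i, ∑ k, if i = k then 0 else ‖ip (d k) (d i)‖ ^ 2 * ‖ρ i k‖ ^ 2)

/-- The post-interaction detector state `ρ̃_D = ∑ i, q i • d i (d i)^*`. -/
def detState {m n : ℕ} (d : Fin n → Fin m → ℂ) (q : Fin n → ℝ) :
    Matrix (Fin m) (Fin m) ℂ :=
  ∑ i, (q i : ℂ) • vecMulVec (d i) (star (d i))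

/-- The post-interaction particle state `(ρ̃_A)_{ik} = ⟨d_k, d_i⟩ (ρ_A)_{ik}`. -/
def post {m n : ℕ} (d : Fin n → Fin m → ℂ) (ρ : Matrix (Fin n) (Fin n) ℂ) :
    Matrix (Fin n) (Fin n) ℂ :=
  Matrix.of fun i k => ip (d k) (d i) * ρ i k

/-- The purity `Tr(ρ²)` (as a real number). -/
def purity {k : Type*} [Fintype k] (ρ : Matrix k k ℂ) : ℝ := ((ρ * ρ).trace).re

/-- The normalized mixedness `M(ρ) = (2(n−1)/n²)(1 − Tr(ρ²))`. -/
def Mix {k : Type*} [Fintype k] (n : ℕ) (ρ : Matrix k k ℂ) : ℝ :=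
  (2 * ((n : ℝ) - 1) / (n : ℝ) ^ 2) * (1 - purity ρ)

/-! For priors `q₀ + q₁ = 1`, the POVM `{Π, 1 - Π}` succeeds with probability `q₁ + Tr(Π Γ)`,
where `Γ = q₀ |d₀⟩⟨d₀| - q₁ |d₁⟩⟨d₁|` is the Helstrom operator. With `c = |⟨d₀, d₁⟩|² < 1`, `Γ` has
two orthogonal eigenvectors in `span {d₀, d₁}`, with eigenvalues
`P = (q₀ - q₁ + √(1 - 4 q₀ q₁ c)) / 2 ≥ 0` and `q₀ - q₁ - P ≤ 0`. Hence `Tr(Π Γ) ≤ P` whenever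
`0 ≤ Π ≤ 1`, with equality for the projector onto the first eigenvector, and
`P_s = (1 + √(1 - 4 q₀ q₁ c)) / 2`. At `c = 1/2` this is `(P_s - 1/2)² = (q₀² + q₁²) / 4`, while
`V² = |ρ₀₁|² / 2` and `Tr(ρ̃²) = q₀² + q₁² + |ρ₀₁|²`, so the purity terms cancel. -/

open scoped MatrixOrder

theorem vecMulVec_smul_add_smul_star {k : Type*} (x y : k → ℂ) (a b : ℂ) :
    vecMulVec (a • x + b • y) (star (a • x + b • y)) =
      (a * star a) • vecMulVec x (star x) + (a * star b) • vecMulVec x (star y) +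
        (b * star a) • vecMulVec y (star x) + (b * star b) • vecMulVec y (star y) := by
  ext i j
  simp only [vecMulVec_apply, Pi.add_apply, Pi.smul_apply, Pi.star_apply, star_add, star_smul,
    smul_eq_mul, Matrix.add_apply, Matrix.smul_apply]
  ring

section InnerProduct

variable {k : Type*} [Fintype k]

theorem ip_eq_star_dotProduct (a b : k → ℂ) : ip a b = star a ⬝ᵥ b := rfl

theorem star_ip (a b : k → ℂ) : star (ip a b) = ip b a := (star_dotProduct b a).symm

theorem ip_sub_right (a b c : k → ℂ) : ip a (b - c) = ip a b - ip a c := dotProduct_sub _ _ _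

theorem ip_smul_add_smul (x y : k → ℂ) (a b c e : ℂ) :
    ip (a • x + b • y) (c • x + e • y) =
      star a * c * ip x x + star a * e * ip x y + star b * c * ip y x + star b * e * ip y y := by
  simp only [ip_eq_star_dotProduct, star_add, star_smul, add_dotProduct, dotProduct_add,
    smul_dotProduct, dotProduct_smul, smul_eq_mul]
  ring

theorem trace_mul_vecMulVec_star (A : Matrix k k ℂ) (a : k → ℂ) :
    (A * vecMulVec a (star a)).trace = ip a (A *ᵥ a) := by
  rw [mul_vecMulVec, trace_vecMulVec, dotProduct_comm, ip_eq_star_dotProduct]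

theorem trace_vecMulVec_star_mul_vecMulVec_star (a b : k → ℂ) :
    (vecMulVec a (star a) * vecMulVec b (star b)).trace = ip a b * ip b a := by
  rw [vecMulVec_mul_vecMulVec, trace_vecMulVec, dotProduct_smul, dotProduct_comm a,
    ip_eq_star_dotProduct, ip_eq_star_dotProduct, smul_eq_mul]

theorem Matrix.PosSemidef.re_ip_mulVec_nonneg {A : Matrix k k ℂ} (hA : A.PosSemidef)
    (a : k → ℂ) : 0 ≤ (ip a (A *ᵥ a)).re :=
  (Complex.nonneg_iff.mp (hA.dotProduct_mulVec_nonneg a)).1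

theorem isStarProjection_smul_vecMulVec_star {u : k → ℂ} {N : ℝ} (hN : N ≠ 0)
    (hu : ip u u = N) : IsStarProjection ((N : ℂ)⁻¹ • vecMulVec u (star u)) := by
  refine ⟨?_, ?_⟩
  · rw [IsIdempotentElem, smul_mul_smul, vecMulVec_mul_vecMulVec, ← ip_eq_star_dotProduct, hu,
      vecMulVec_smul, smul_smul]
    congr 1
    field_simp
  · rw [IsSelfAdjoint, star_smul, star_inv₀, Complex.star_def, Complex.conj_ofReal]
    congr 1
    rw [star_eq_conjTranspose, conjTranspose_vecMulVec, star_star]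

end InnerProduct

theorem isGreatest_re_trace_mul_of_smul_eq {k : Type*} [Fintype k] [DecidableEq k]
    {Γ : Matrix k k ℂ} {u w : k → ℂ} {N l κ : ℝ} (hN : 0 < N) (hu : ip u u = N)
    (huw : ip u w = 0) (hl : 0 ≤ l) (hκ : κ ≤ 0)
    (hΓ : (N : ℂ) • Γ = (l : ℂ) • vecMulVec u (star u) + (κ : ℂ) • vecMulVec w (star w)) :
    IsGreatest {x | ∃ A : Matrix k k ℂ, A.PosSemidef ∧ (1 - A).PosSemidef ∧
      x = (A * Γ).trace.re} l := by
  have key (A : Matrix k k ℂ) :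
      N * (A * Γ).trace.re = l * (ip u (A *ᵥ u)).re + κ * (ip w (A *ᵥ w)).re := by
    simpa only [Matrix.mul_smul, Matrix.mul_add, trace_add, trace_smul, smul_eq_mul,
      trace_mul_vecMulVec_star, Complex.add_re, Complex.re_ofReal_mul]
      using congrArg (fun M => (A * M).trace.re) hΓ
  refine ⟨?_, ?_⟩
  · set Q : Matrix k k ℂ := (N : ℂ)⁻¹ • vecMulVec u (star u)
    have hQ : IsStarProjection Q := isStarProjection_smul_vecMulVec_star hN.ne' hu
    refine ⟨Q, hQ.nonneg.posSemidef, hQ.one_sub_nonneg.posSemidef, ?_⟩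
    have hQu : ip u (Q *ᵥ u) = N := by
      rw [← trace_mul_vecMulVec_star, smul_mul, trace_smul,
        trace_vecMulVec_star_mul_vecMulVec_star, hu, smul_eq_mul]
      field_simp
    have hQw : ip w (Q *ᵥ w) = 0 := by
      rw [← trace_mul_vecMulVec_star, smul_mul, trace_smul,
        trace_vecMulVec_star_mul_vecMulVec_star, huw, zero_mul, smul_zero]
    have h := key Q
    rw [hQu, hQw, Complex.ofReal_re, Complex.zero_re] at h
    exact (mul_left_cancel₀ hN.ne' (h.trans (by ring))).symm
  · rintro x ⟨A, hA, hA', rfl⟩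
    have hw := hA.re_ip_mulVec_nonneg w
    have hu' : (ip u (A *ᵥ u)).re ≤ N := by
      have h := hA'.re_ip_mulVec_nonneg u
      rwa [sub_mulVec, one_mulVec, ip_sub_right, hu, Complex.sub_re, Complex.ofReal_re,
        sub_nonneg] at h
    nlinarith [key A, mul_le_mul_of_nonneg_left hu' hl, mul_nonpos_of_nonpos_of_nonneg hκ hw]

def helstromOp {k : Type*} (d : Fin 2 → k → ℂ) (q : Fin 2 → ℝ) : Matrix k k ℂ :=
  (q 0 : ℂ) • vecMulVec (d 0) (star (d 0)) - (q 1 : ℂ) • vecMulVec (d 1) (star (d 1))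

theorem re_trace_mul_helstromOp {k : Type*} [Fintype k] (d : Fin 2 → k → ℂ) (q : Fin 2 → ℝ)
    (A : Matrix k k ℂ) :
    (A * helstromOp d q).trace.re =
      q 0 * (ip (d 0) (A *ᵥ d 0)).re - q 1 * (ip (d 1) (A *ᵥ d 1)).re := by
  simp only [helstromOp, Matrix.mul_sub, Matrix.mul_smul, trace_sub, trace_smul, smul_eq_mul,
    trace_mul_vecMulVec_star, Complex.sub_re, Complex.re_ofReal_mul]

theorem Ps_eq_add_of_isGreatest {m : ℕ} {d : Fin 2 → Fin m → ℂ} {q : Fin 2 → ℝ} {l : ℝ}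
    (hd₁ : ip (d 1) (d 1) = 1)
    (hl : IsGreatest {x | ∃ A : Matrix (Fin m) (Fin m) ℂ, A.PosSemidef ∧ (1 - A).PosSemidef ∧
      x = (A * helstromOp d q).trace.re} l) :
    Ps d q = q 1 + l := by
  have success (A : Matrix (Fin m) (Fin m) ℂ) :
      q 0 * (ip (d 0) (A *ᵥ d 0)).re + q 1 * (ip (d 1) ((1 - A) *ᵥ d 1)).re =
        q 1 + (A * helstromOp d q).trace.re := by
    rw [re_trace_mul_helstromOp, sub_mulVec, one_mulVec, ip_sub_right, hd₁, Complex.sub_re,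
      Complex.one_re]
    ring
  refine IsGreatest.csSup_eq ⟨?_, ?_⟩
  · obtain ⟨A, hA, hA', hlA⟩ := hl.1
    refine ⟨![A, 1 - A], fun i => ?_, by simp [Fin.sum_univ_two], ?_⟩
    · fin_cases i
      exacts [hA, hA']
    · simp [Fin.sum_univ_two, success, hlA]
  · rintro x ⟨Pov, hPov, hsum, rfl⟩
    have h1 : Pov 1 = 1 - Pov 0 := eq_sub_of_add_eq' (by simpa [Fin.sum_univ_two] using hsum)
    rw [Fin.sum_univ_two, h1, success]
    exact add_le_add_right (hl.2 ⟨Pov 0, hPov 0, h1 ▸ hPov 1, rfl⟩) _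

section HelstromEigenvectors

variable {k : Type*} [Fintype k] (d : Fin 2 → k → ℂ) (q : Fin 2 → ℝ) (P : ℝ)

/- When `P² = (q₀ - q₁) P + q₀ q₁ (1 - |⟨d₀, d₁⟩|²)`, these are eigenvectors of `helstromOp d q`
for the eigenvalues `P` and `q₀ - q₁ - P`. -/
def helstromVecPos : k → ℂ :=
  ((P + q 1 : ℝ) : ℂ) • d 0 + (-(q 1 : ℂ) * ip (d 1) (d 0)) • d 1

def helstromVecNeg : k → ℂ :=
  (-(P : ℂ) * ip (d 0) (d 1)) • d 0 + ((P + q 1 * (1 - ‖ip (d 0) (d 1)‖ ^ 2) : ℝ) : ℂ) • d 1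

variable {d}

theorem ip_helstromVecPos_self (hd : ∀ i, ip (d i) (d i) = 1) :
    ip (helstromVecPos d q P) (helstromVecPos d q P) =
      (((1 - ‖ip (d 0) (d 1)‖ ^ 2) * (P + q 1) ^ 2 + ‖ip (d 0) (d 1)‖ ^ 2 * P ^ 2 : ℝ) : ℂ) := by
  have hs := Complex.mul_conj' (ip (d 0) (d 1))
  rw [helstromVecPos, ip_smul_add_smul, hd 0, hd 1, ← star_ip (d 0) (d 1)]
  push_cast
  simp only [star_mul', star_neg, Complex.star_def, map_add, Complex.conj_ofReal,
    Complex.conj_conj, ← hs]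
  ring

theorem ip_helstromVecPos_helstromVecNeg (hd : ∀ i, ip (d i) (d i) = 1) :
    ip (helstromVecPos d q P) (helstromVecNeg d q P) = 0 := by
  have hs := Complex.mul_conj' (ip (d 0) (d 1))
  rw [helstromVecPos, helstromVecNeg, ip_smul_add_smul, hd 0, hd 1, ← star_ip (d 0) (d 1)]
  push_cast
  simp only [star_mul', star_neg, Complex.star_def, map_add, Complex.conj_ofReal,
    Complex.conj_conj, ← hs]
  ring

/- The factor `1 / (1 - |⟨d₀, d₁⟩|²)` is the ratio of the squared norms of the two
eigenvectors (for unit `d i`). -/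
theorem smul_helstromOp_eq (hc : ‖ip (d 0) (d 1)‖ ^ 2 ≠ 1)
    (hP : P ^ 2 = (q 0 - q 1) * P + q 0 * q 1 * (1 - ‖ip (d 0) (d 1)‖ ^ 2)) :
    (((1 - ‖ip (d 0) (d 1)‖ ^ 2) * (P + q 1) ^ 2 + ‖ip (d 0) (d 1)‖ ^ 2 * P ^ 2 : ℝ) : ℂ) •
        helstromOp d q =
      (P : ℂ) • vecMulVec (helstromVecPos d q P) (star (helstromVecPos d q P)) +
        (((q 0 - q 1 - P) / (1 - ‖ip (d 0) (d 1)‖ ^ 2) : ℝ) : ℂ) •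
          vecMulVec (helstromVecNeg d q P) (star (helstromVecNeg d q P)) := by
  have hs := Complex.mul_conj' (ip (d 0) (d 1))
  have hc' : 1 - ip (d 0) (d 1) * starRingEnd ℂ (ip (d 0) (d 1)) ≠ 0 := by
    rw [hs, sub_ne_zero]
    exact_mod_cast hc.symm
  have hc'' : 1 - starRingEnd ℂ (ip (d 0) (d 1)) * ip (d 0) (d 1) ≠ 0 := by rwa [mul_comm]
  have hPC := congrArg (fun x : ℝ => (x : ℂ)) hP
  rw [helstromOp, helstromVecPos, helstromVecNeg, vecMulVec_smul_add_smul_star,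
    vecMulVec_smul_add_smul_star, ← star_ip (d 0) (d 1)]
  push_cast at hPC ⊢
  simp only [star_mul', star_neg, Complex.star_def, map_add, map_sub, map_mul, map_one,
    Complex.conj_ofReal, Complex.conj_conj, ← hs] at hPC ⊢
  generalize ip (d 0) (d 1) = s at hPC hc' hc'' ⊢
  match_scalars <;> field_simp
  · linear_combination (s * starRingEnd ℂ s * P - (1 - s * starRingEnd ℂ s) * (P + q 1)) * hPC
  · linear_combination (P + (1 - s * starRingEnd ℂ s) * q 1) * hPC
  · linear_combination (-(P : ℂ) * s) * hPC
  · linear_combination (-(P : ℂ) * starRingEnd ℂ s) * hPC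

end HelstromEigenvectors

theorem Ps_eq_of_norm_ip_sq_lt_one {m : ℕ} {d : Fin 2 → Fin m → ℂ}
    (hd : ∀ i, ip (d i) (d i) = 1) (hc : ‖ip (d 0) (d 1)‖ ^ 2 < 1) {q : Fin 2 → ℝ}
    (hq : ∀ i, 0 ≤ q i) (hsum : q 0 + q 1 = 1) :
    Ps d q = (1 + √(1 - 4 * q 0 * q 1 * ‖ip (d 0) (d 1)‖ ^ 2)) / 2 := by
  set c := ‖ip (d 0) (d 1)‖ ^ 2
  have hdisc : (q 0 - q 1) ^ 2 ≤ 1 - 4 * q 0 * q 1 * c := by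
    nlinarith [mul_le_mul_of_nonneg_left hc.le (mul_nonneg (hq 0) (hq 1))]
  have hD := abs_le.mp (Real.abs_le_sqrt hdisc)
  have hD2 := Real.sq_sqrt ((sq_nonneg _).trans hdisc)
  set D := √(1 - 4 * q 0 * q 1 * c)
  set P := (q 0 - q 1 + D) / 2 with hP_def
  have hP : P ^ 2 = (q 0 - q 1) * P + q 0 * q 1 * (1 - c) := by
    linear_combination (1 / 4 : ℝ) * hD2 - (q 0 + q 1 + 1) / 4 * hsum
  have hP0 : 0 ≤ P := by linarith
  have hκ : (q 0 - q 1 - P) / (1 - c) ≤ 0 :=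
    div_nonpos_of_nonpos_of_nonneg (by linarith) (by linarith)
  have hN : 0 < (1 - c) * (P + q 1) ^ 2 + c * P ^ 2 := by
    have hPq : 0 < P + q 1 := by linarith [Real.sqrt_nonneg (1 - 4 * q 0 * q 1 * c)]
    exact add_pos_of_pos_of_nonneg (mul_pos (sub_pos.mpr hc) (pow_pos hPq 2)) (by positivity)
  rw [Ps_eq_add_of_isGreatest (hd 1) (isGreatest_re_trace_mul_of_smul_eq hN
    (ip_helstromVecPos_self q P hd) (ip_helstromVecPos_helstromVecNeg q P hd) hP0 hκ
    (smul_helstromOp_eq q P hc.ne hP))]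
  linarith

theorem Vis_sq_fin_two {m : ℕ} (d : Fin 2 → Fin m → ℂ) (ρ : Matrix (Fin 2) (Fin 2) ℂ) :
    Vis d ρ ^ 2 = ‖ip (d 0) (d 1)‖ ^ 2 * (‖ρ 0 1‖ ^ 2 + ‖ρ 1 0‖ ^ 2) / 2 := by
  have hnorm : ‖ip (d 1) (d 0)‖ = ‖ip (d 0) (d 1)‖ := by rw [← star_ip, norm_star]
  simp only [Vis, Fin.sum_univ_two, hnorm]
  rw [Real.sq_sqrt (by positivity)]
  norm_num
  ring

theorem purity_post_fin_two {m : ℕ} {d : Fin 2 → Fin m → ℂ} (hd : ∀ i, ip (d i) (d i) = 1)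
    {ρ : Matrix (Fin 2) (Fin 2) ℂ} (hρ : ρ.IsHermitian) :
    purity (post d ρ) =
      (ρ 0 0).re ^ 2 + (ρ 1 1).re ^ 2 + 2 * ‖ip (d 0) (d 1)‖ ^ 2 * ‖ρ 0 1‖ ^ 2 := by
  have h10 : ρ 1 0 = star (ρ 0 1) := (hρ.apply 1 0).symm
  have h00 : ρ 0 0 = ((ρ 0 0).re : ℂ) := (hρ.coe_re_apply_self 0).symm
  have h11 : ρ 1 1 = ((ρ 1 1).re : ℂ) := (hρ.coe_re_apply_self 1).symm
  have hs := Complex.mul_conj' (ip (d 0) (d 1))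
  have hz := Complex.mul_conj' (ρ 0 1)
  have htr : (post d ρ * post d ρ).trace =
      (((ρ 0 0).re ^ 2 + (ρ 1 1).re ^ 2 + 2 * ‖ip (d 0) (d 1)‖ ^ 2 * ‖ρ 0 1‖ ^ 2 : ℝ) : ℂ) := by
    rw [trace_fin_two]
    simp only [mul_apply, Fin.sum_univ_two, post, of_apply, hd, h10, ← star_ip (d 0) (d 1),
      Complex.star_def]
    push_cast
    linear_combination (ρ 0 0 + (ρ 0 0).re) * h00 + (ρ 1 1 + (ρ 1 1).re) * h11 +
      2 * ρ 0 1 * starRingEnd ℂ (ρ 0 1) * hs + 2 * (‖ip (d 0) (d 1)‖ : ℂ) ^ 2 * hz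
  rw [purity, htr, Complex.ofReal_re]

/-- for the two-path interferometer with detector states of overlap
`|⟨d₁,d₂⟩|² = 1/2`, the triality among path distinguishability, visibility and
mixedness is complete (an identity). -/
theorem stmt3 (m : ℕ) (d : Fin 2 → Fin m → ℂ)
    (hd : ∀ i, ip (d i) (d i) = 1)
    (hover : ‖ip (d 0) (d 1)‖ ^ 2 = 1 / 2)
    (ρA : Matrix (Fin 2) (Fin 2) ℂ) (hpsd : ρA.PosSemidef) (htr : ρA.trace = 1)
    (q : Fin 2 → ℝ) (hq : ∀ i, (q i : ℂ) = ρA i i) :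
    (Ps d q - 1 / 2) ^ 2 + (1 / 2) * (Vis d ρA) ^ 2 + (1 / 2) * Mix 2 (post d ρA)
      = 1 / 4 := by
  have hre (i : Fin 2) : (ρA i i).re = q i := by rw [← hq i, Complex.ofReal_re]
  have hq_nonneg (i : Fin 2) : 0 ≤ q i := Complex.zero_le_real.mp (hq i ▸ hpsd.diag_nonneg)
  have hq_sum : q 0 + q 1 = 1 := by
    rw [trace_fin_two, ← hq 0, ← hq 1] at htr
    exact_mod_cast htr
  have h10 : ‖ρA 1 0‖ = ‖ρA 0 1‖ := by rw [← hpsd.isHermitian.apply, norm_star]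
  have hD : √(1 - 4 * q 0 * q 1 * (1 / 2)) ^ 2 = 1 - 4 * q 0 * q 1 * (1 / 2) :=
    Real.sq_sqrt (by nlinarith [sq_nonneg (q 0 - q 1)])
  rw [Ps_eq_of_norm_ip_sq_lt_one hd (by rw [hover]; norm_num) hq_nonneg hq_sum, Vis_sq_fin_two,
    Mix, purity_post_fin_two hd hpsd.isHermitian, hover, h10, hre, hre]
  norm_num
  linear_combination hD / 4 - (q 0 + q 1 + 1) / 4 * hq_sum
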